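/- Let zᵢ = R xᵢ + t for all i with R ∈ SO(3), t ∈ ℝ³, and suppose the points x₁,...,xₙ are not collinear (n ≥ 3 and they affinely span a plane or more). Then the pair (R, t) satisfying zᵢ = R xᵢ + t for all i is unique: if R' ∈ SO(3), t' ∈ ℝ³ also satisfy zᵢ = R' xᵢ + t' for all i, then R' = R and t' = t. -/

import Mathlib

def SO3 : Set (Matrix (Fin 3) (Fin 3) ℝ) :=
  {R | R.transpose * R = 1 ∧ R.det = 1}

/-!
Subtracting the equations for two points eliminates the translation, so the rotation
`Q = Rᵀ R'` fixes the two independent difference vectors `u, v` given by non-collinearity.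
Since `Q` is orthogonal with determinant `1`, it commutes with the cross product and hence also
fixes `u ⨯₃ v`. The three vectors form a basis of `ℝ³`, so `Q = 1`, i.e. `R' = R`, and then
`t' = t` follows from any single point.
-/

open Matrix

theorem Matrix.transpose_mulVec_cross_mulVec {K : Type*} [CommRing K]
    (A : Matrix (Fin 3) (Fin 3) K) (u v : Fin 3 → K) :
    Aᵀ *ᵥ ((A *ᵥ u) ⨯₃ (A *ᵥ v)) = A.det • (u ⨯₃ v) := by
  ext i
  fin_cases i <;>
  · simp [crossProduct, mulVec, dotProduct, det_fin_three, Fin.sum_univ_succ]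
    ring

theorem linearIndependent_triple_crossProduct {K : Type*} [Field K] [LinearOrder K]
    [IsStrictOrderedRing K] {u v : Fin 3 → K} (h : LinearIndependent K ![u, v]) :
    LinearIndependent K ![u, v, u ⨯₃ v] := by
  have hw : u ⨯₃ v ≠ 0 := crossProduct_ne_zero_iff_linearIndependent.mpr h
  have hdet : det ![u, v, u ⨯₃ v] ≠ 0 := by
    rw [← triple_product_eq_det, triple_product_permutation, triple_product_permutation]
    exact fun h0 => hw (dotProduct_self_eq_zero.mp h0)
  exact linearIndependent_rows_iff_isUnit.mpr ((isUnit_iff_isUnit_det _).mpr hdet.isUnit)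

theorem Matrix.eq_one_of_mulVec_eq_self {K n ι : Type*} [CommRing K] [Fintype n]
    [DecidableEq n] {A : Matrix n n K} {b : ι → n → K}
    (hb : Submodule.span K (Set.range b) = ⊤) (hA : ∀ i, A *ᵥ b i = b i) : A = 1 :=
  toLin'.injective <| LinearMap.ext_on_range hb fun i => by simp [hA i]

theorem transpose_mul_mem_SO3 {R R' : Matrix (Fin 3) (Fin 3) ℝ}
    (hR : R ∈ SO3) (hR' : R' ∈ SO3) : Rᵀ * R' ∈ SO3 := by
  refine ⟨?_, by rw [det_mul, det_transpose, hR.2, hR'.2, one_mul]⟩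
  rw [transpose_mul, transpose_transpose, Matrix.mul_assoc, ← Matrix.mul_assoc R,
    mul_eq_one_comm.mp hR.1, Matrix.one_mul, hR'.1]

theorem eq_one_of_mem_SO3_of_mulVec_eq_self {Q : Matrix (Fin 3) (Fin 3) ℝ} (hQ : Q ∈ SO3)
    {u v : Fin 3 → ℝ} (huv : LinearIndependent ℝ ![u, v])
    (hu : Q *ᵥ u = u) (hv : Q *ᵥ v = v) : Q = 1 := by
  have hcross : Q *ᵥ (u ⨯₃ v) = u ⨯₃ v := by
    have h := Matrix.transpose_mulVec_cross_mulVec Q u v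
    rw [hu, hv, hQ.2, one_smul] at h
    nth_rw 1 [← h]
    rw [mulVec_mulVec, mul_eq_one_comm.mp hQ.1, one_mulVec]
  have hspan : Submodule.span ℝ (Set.range ![u, v, u ⨯₃ v]) = ⊤ :=
    (linearIndependent_triple_crossProduct huv).span_eq_top_of_card_eq_finrank (by simp)
  refine eq_one_of_mulVec_eq_self hspan fun i => ?_
  fin_cases i <;> simp [hu, hv, hcross]

/-- if the points xᵢ are not collinear, the rigid transform (R, t)
with zᵢ = R xᵢ + t for all i is unique. -/
theorem stmt9 (n : ℕ) (x z : Fin n → Fin 3 → ℝ)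
    -- not collinear: some pair of difference vectors is linearly independent
    (hnc : ∃ i j k : Fin n, LinearIndependent ℝ ![x j - x i, x k - x i])
    (R R' : Matrix (Fin 3) (Fin 3) ℝ) (t t' : Fin 3 → ℝ)
    (hR : R ∈ SO3) (hR' : R' ∈ SO3)
    (hz : ∀ i, z i = R.mulVec (x i) + t)
    (hz' : ∀ i, z i = R'.mulVec (x i) + t') :
    R' = R ∧ t' = t := by
  obtain ⟨i, j, k, hli⟩ := hnc
  have hfix : ∀ p, (Rᵀ * R') *ᵥ (x p - x i) = x p - x i := fun p => by
    have hdiff : R' *ᵥ (x p - x i) = R *ᵥ (x p - x i) := by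
      rw [mulVec_sub, mulVec_sub]
      linear_combination (norm := module) (hz' p).symm.trans (hz p) - (hz' i).symm.trans (hz i)
    rw [← mulVec_mulVec, hdiff, mulVec_mulVec, hR.1, one_mulVec]
  have hQ : Rᵀ * R' = 1 :=
    eq_one_of_mem_SO3_of_mulVec_eq_self (transpose_mul_mem_SO3 hR hR') hli (hfix j) (hfix k)
  have hRR' : R' = R := (left_inv_eq_right_inv (mul_eq_one_comm.mp hR.1) hQ).symm
  refine ⟨hRR', add_left_cancel (a := R *ᵥ x i) ?_⟩
  rw [← hz i, ← hRR', ← hz' i]
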